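/- Let n ≥ 2 and w(x₁,…,xₙ) = 1/(1+|xₙ|)². For ℓ ∈ ℕ₊ set R_ℓ = [0,2^ℓ)ⁿ and E_ℓ = [0,2^ℓ)^{n−1} × [0,1). Then w(R_ℓ) = 2^{ℓn}/(1+2^ℓ), w(E_ℓ)/w(R_ℓ) = (1 + 2^{−ℓ})/2, and |E_ℓ|/|R_ℓ| = 2^{−ℓ}. Consequently, there exist no constants C, δ > 0 such that w(E_ℓ)/w(R_ℓ) ≤ C (|E_ℓ|/|R_ℓ|)^δ for all ℓ ∈ ℕ₊; in particular w ∉ A_{∞,𝓡}(ℝⁿ). -/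

import Mathlib

open MeasureTheory Set

noncomputable section

/-- An axis-parallel rectangle in `ℝⁿ`. -/
def IsRect {n : ℕ} (R : Set (Fin n → ℝ)) : Prop :=
  ∃ a b : Fin n → ℝ, (∀ i, a i < b i) ∧
    R = Set.univ.pi fun i => Set.Ico (a i) (b i)

/-- The strong Muckenhoupt `A_{∞,𝓡}` condition. -/
def AinftyRect {n : ℕ} (w : (Fin n → ℝ) → ℝ) : Prop :=
  ∃ C δ : ℝ, 0 < C ∧ 0 < δ ∧
    ∀ R E : Set (Fin n → ℝ), IsRect R → MeasurableSet E → E ⊆ R →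
      (∫ x in E, w x) / (∫ x in R, w x) ≤
        C * ((volume E).toReal / (volume R).toReal) ^ δ

/-! The weight depends on the last coordinate only, so its integral over a box factors as
`∫₀ᵇ (1 + t)⁻² dt = b / (1 + b)` times the volume of the remaining face. Thus `E_ℓ` carries the
fraction `(1 + 2^{-ℓ}) / 2 ≥ 1/2` of the weighted mass of `R_ℓ` while its fraction of Lebesgue
measure is `2^{-ℓ} → 0`, which no bound `C (|E| / |R|)^δ` with `δ > 0` allows. -/

open Filter Topology

theorem setIntegral_univ_pi_comp_eval {ι : Type*} [Fintype ι] [DecidableEq ι]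
    (s : ι → Set ℝ) (i₀ : ι) (f : ℝ → ℝ) :
    ∫ x in univ.pi s, f (x i₀) =
      (∫ t in s i₀, f t) * ∏ i ∈ Finset.univ.erase i₀, volume.real (s i) := by
  have hf : (fun x : ι → ℝ => f (x i₀)) =
      fun x => ∏ i, (fun t => if i = i₀ then f t else 1) (x i) := by
    ext x
    simp
  rw [hf, volume_pi, Measure.restrict_pi_pi,
    integral_fintype_prod_eq_prod (fun i t => if i = i₀ then f t else 1),
    ← Finset.mul_prod_erase _ _ (Finset.mem_univ i₀)]
  congr 1
  · simp only [if_true]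
  refine Finset.prod_congr rfl fun i hi => ?_
  simp [if_neg (Finset.ne_of_mem_erase hi)]

theorem integral_Ico_one_add_abs_zpow_neg_two {b : ℝ} (hb : 0 ≤ b) :
    ∫ t in Ico 0 b, (1 + |t|) ^ (-2 : ℤ) = b / (1 + b) := by
  have hnonneg : ∀ t ∈ uIcc 0 b, 0 ≤ t := fun t ht => by
    rw [uIcc_of_le hb] at ht; exact ht.1
  rw [integral_Ico_eq_integral_Ioo, ← integral_Ioc_eq_integral_Ioo,
    ← intervalIntegral.integral_of_le hb]
  have hderiv : ∀ t ∈ uIcc 0 b, HasDerivAt (fun t => -(1 + t)⁻¹) ((1 + |t|) ^ (-2 : ℤ)) t := by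
    intro t ht
    have ht0 : 1 + t ≠ 0 := by linarith [hnonneg t ht]
    refine (((hasDerivAt_id' t).const_add 1).inv ht0).neg.congr_deriv ?_
    rw [abs_of_nonneg (hnonneg t ht)]
    field_simp
  have hcont : Continuous fun t : ℝ => (1 + |t|) ^ (-2 : ℤ) :=
    (continuous_const.add continuous_abs).zpow₀ _ fun t =>
      Or.inl (by positivity : (0 : ℝ) < 1 + |t|).ne'
  rw [intervalIntegral.integral_eq_sub_of_hasDerivAt hderiv (hcont.intervalIntegrable _ _)]
  field_simp
  ring

def cornerBox {ι : Type*} [DecidableEq ι] (i₀ : ι) (b c : ℝ) : Set (ι → ℝ) :=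
  univ.pi fun i => if i = i₀ then Ico 0 b else Ico 0 c

section cornerBox

variable {ι : Type*} [DecidableEq ι] (i₀ : ι) {b c : ℝ}

theorem cornerBox_self (c : ℝ) : cornerBox i₀ c c = univ.pi fun _ => Ico 0 c := by
  simp [cornerBox]

theorem measurableSet_cornerBox [Countable ι] (b c : ℝ) : MeasurableSet (cornerBox i₀ b c) :=
  .univ_pi fun i => by split_ifs <;> exact measurableSet_Ico

theorem cornerBox_subset_cornerBox {b' : ℝ} (hb : b ≤ b') :
    cornerBox i₀ b c ⊆ cornerBox i₀ b' c :=
  pi_mono fun i _ => by split_ifs <;> [exact Ico_subset_Ico_right hb; exact subset_rfl]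

variable [Fintype ι]

theorem setIntegral_cornerBox_comp_eval (f : ℝ → ℝ) (hc : 0 ≤ c) :
    ∫ x in cornerBox i₀ b c, f (x i₀) = (∫ t in Ico 0 b, f t) * c ^ (Fintype.card ι - 1) := by
  rw [cornerBox, setIntegral_univ_pi_comp_eval, if_pos rfl,
    Finset.prod_congr rfl fun i hi => by rw [if_neg (Finset.ne_of_mem_erase hi)]]
  simp [Real.volume_real_Ico_of_le hc, Finset.card_erase_of_mem]

theorem setIntegral_cornerBox_weight (hb : 0 ≤ b) (hc : 0 ≤ c) :
    ∫ x in cornerBox i₀ b c, (1 + |x i₀|) ^ (-2 : ℤ) =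
      b / (1 + b) * c ^ (Fintype.card ι - 1) := by
  rw [setIntegral_cornerBox_comp_eval i₀ (fun t => (1 + |t|) ^ (-2 : ℤ)) hc,
    integral_Ico_one_add_abs_zpow_neg_two hb]

theorem volume_real_cornerBox (hb : 0 ≤ b) (hc : 0 ≤ c) :
    volume.real (cornerBox i₀ b c) = b * c ^ (Fintype.card ι - 1) := by
  simpa [Real.volume_real_Ico_of_le hb] using setIntegral_cornerBox_comp_eval i₀ (b := b) 1 hc

theorem setIntegral_cornerBox_self_weight (hc : 0 ≤ c) :
    ∫ x in cornerBox i₀ c c, (1 + |x i₀|) ^ (-2 : ℤ) = c ^ Fintype.card ι / (1 + c) := by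
  have hcard : Fintype.card ι - 1 + 1 = Fintype.card ι :=
    Nat.sub_add_cancel (Fintype.card_pos_iff.2 ⟨i₀⟩)
  rw [setIntegral_cornerBox_weight i₀ hc hc, ← hcard, pow_succ, Nat.add_sub_cancel]
  ring

theorem cornerBox_weight_ratio (hc : 0 < c) :
    (∫ x in cornerBox i₀ 1 c, (1 + |x i₀|) ^ (-2 : ℤ)) /
      (∫ x in cornerBox i₀ c c, (1 + |x i₀|) ^ (-2 : ℤ)) = (1 + c⁻¹) / 2 := by
  rw [setIntegral_cornerBox_weight i₀ zero_le_one hc.le,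
    setIntegral_cornerBox_weight i₀ hc.le hc.le]
  field_simp
  ring

theorem cornerBox_volume_ratio (hc : 0 < c) :
    volume.real (cornerBox i₀ 1 c) / volume.real (cornerBox i₀ c c) = c⁻¹ := by
  rw [volume_real_cornerBox i₀ zero_le_one hc.le, volume_real_cornerBox i₀ hc.le hc.le]
  field_simp

end cornerBox

theorem not_exists_le_mul_two_rpow_neg :
    ¬ ∃ C δ : ℝ, 0 < δ ∧ ∀ ℓ : ℕ, 1 ≤ ℓ →
      (1 + 2 ^ (-(ℓ : ℝ))) / 2 ≤ C * (2 ^ (-(ℓ : ℝ))) ^ δ := by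
  rintro ⟨C, δ, hδ, h⟩
  have hlim : Tendsto (fun ℓ : ℕ => C * ((2 : ℝ) ^ (-(ℓ : ℝ))) ^ δ) atTop (𝓝 0) := by
    have h2 : Tendsto (fun ℓ : ℕ => (2 : ℝ) ^ (-(ℓ : ℝ))) atTop (𝓝 0) := by
      simpa [Real.rpow_neg, Real.rpow_natCast] using
        tendsto_pow_atTop_nhds_zero_of_lt_one (by norm_num : (0 : ℝ) ≤ 2⁻¹) (by norm_num)
    simpa using (h2.rpow_const_nhds_zero hδ).const_mul C
  have hsmall := hlim.eventually (gt_mem_nhds (by norm_num : (0 : ℝ) < 1 / 2))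
  obtain ⟨ℓ, hℓ, hlt⟩ := ((eventually_ge_atTop 1).and hsmall).exists
  have hpos : (0 : ℝ) < 2 ^ (-(ℓ : ℝ)) := by positivity
  linarith [h ℓ hℓ]

theorem stmt7 (n : ℕ) (hn : 2 ≤ n)
    (w : (Fin n → ℝ) → ℝ)
    (hw : w = fun x => (1 + |x ⟨n - 1, by omega⟩|) ^ (-2 : ℤ))
    (R E : ℕ → Set (Fin n → ℝ))
    (hR : ∀ ℓ, R ℓ = Set.univ.pi fun _ => Set.Ico (0 : ℝ) (2 ^ ℓ))
    (hE : ∀ ℓ, E ℓ = Set.univ.pi fun i =>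
      if i = ⟨n - 1, by omega⟩ then Set.Ico (0 : ℝ) 1 else Set.Ico (0 : ℝ) (2 ^ ℓ)) :
    (∀ ℓ : ℕ, 1 ≤ ℓ → (∫ x in R ℓ, w x) = 2 ^ (ℓ * n) / (1 + 2 ^ ℓ)) ∧
    (∀ ℓ : ℕ, 1 ≤ ℓ → (∫ x in E ℓ, w x) / (∫ x in R ℓ, w x) = (1 + 2 ^ (-(ℓ : ℝ))) / 2) ∧
    (∀ ℓ : ℕ, 1 ≤ ℓ → (volume (E ℓ)).toReal / (volume (R ℓ)).toReal = 2 ^ (-(ℓ : ℝ))) ∧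
    (¬ ∃ C δ : ℝ, 0 < C ∧ 0 < δ ∧ ∀ ℓ : ℕ, 1 ≤ ℓ →
      (∫ x in E ℓ, w x) / (∫ x in R ℓ, w x) ≤
        C * ((volume (E ℓ)).toReal / (volume (R ℓ)).toReal) ^ δ) ∧
    ¬ AinftyRect w := by
  set i₀ : Fin n := ⟨n - 1, by omega⟩
  have hR' (ℓ : ℕ) : R ℓ = cornerBox i₀ (2 ^ ℓ) (2 ^ ℓ) :=
    (hR ℓ).trans (cornerBox_self i₀ _).symm
  have hE' (ℓ : ℕ) : E ℓ = cornerBox i₀ 1 (2 ^ ℓ) := hE ℓ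
  have two_rpow_neg (ℓ : ℕ) : (2 : ℝ) ^ (-(ℓ : ℝ)) = ((2 : ℝ) ^ ℓ)⁻¹ := by
    rw [Real.rpow_neg zero_le_two, Real.rpow_natCast]
  have weight_ratio (ℓ : ℕ) :
      (∫ x in E ℓ, w x) / (∫ x in R ℓ, w x) = (1 + 2 ^ (-(ℓ : ℝ))) / 2 := by
    rw [hE', hR', hw, two_rpow_neg, cornerBox_weight_ratio i₀ (by positivity)]
  have volume_ratio (ℓ : ℕ) :
      (volume (E ℓ)).toReal / (volume (R ℓ)).toReal = 2 ^ (-(ℓ : ℝ)) := by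
    rw [hE', hR', two_rpow_neg, ← cornerBox_volume_ratio i₀ (by positivity)]
    rfl
  have no_power_bound : ¬ ∃ C δ : ℝ, 0 < C ∧ 0 < δ ∧ ∀ ℓ : ℕ, 1 ≤ ℓ →
      (∫ x in E ℓ, w x) / (∫ x in R ℓ, w x) ≤
        C * ((volume (E ℓ)).toReal / (volume (R ℓ)).toReal) ^ δ := fun ⟨C, δ, _, hδ, h⟩ =>
    not_exists_le_mul_two_rpow_neg
      ⟨C, δ, hδ, fun ℓ hℓ => by simpa only [weight_ratio, volume_ratio] using h ℓ hℓ⟩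
  refine ⟨fun ℓ _ => ?_, fun ℓ _ => weight_ratio ℓ, fun ℓ _ => volume_ratio ℓ,
    no_power_bound, ?_⟩
  · rw [hR', hw, setIntegral_cornerBox_self_weight i₀ (by positivity), Fintype.card_fin,
      pow_mul]
  · rintro ⟨C, δ, hC, hδ, h⟩
    refine no_power_bound ⟨C, δ, hC, hδ, fun ℓ _ => h _ _ ?_ ?_ ?_⟩
    · exact ⟨0, fun _ => 2 ^ ℓ, fun _ => by positivity, hR ℓ⟩
    · rw [hE']
      exact measurableSet_cornerBox i₀ _ _
    · rw [hE', hR']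
      exact cornerBox_subset_cornerBox i₀ (one_le_pow₀ one_le_two)
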